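/- If the quadruple (λ,λ',γ,γ') of nonnegative reals is F-feasible, then ℱ_{123}(λ,λ',γ,γ') = ℱ̄_{123}(λ,λ',γ,γ'); that is, eliminating the auxiliary rate-splitting variables from this SLS achievable region yields exactly the explicit polyhedral region ℱ̄_{123}(λ,λ',γ,γ'). -/
import Mathlib


/-- The SLS achievable region `ℱ₁₂₃(λ,λ',γ,γ')` with auxiliary rate-splitting
variables (indices `0,1,2` stand for users `1,2,3`). -/
def F123 (α : Fin 3 → Fin 3 → ℝ) (l l' g g' : ℝ) : Set (Fin 3 → ℝ) :=
  { d | ∃ e1 e2 e3 e12 e123 μ1 μ2 ξ1 ξ2 ξ3 : ℝ,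
      0 ≤ e1 ∧ 0 ≤ e2 ∧ 0 ≤ e3 ∧ 0 ≤ e12 ∧ 0 ≤ e123 ∧
      0 ≤ μ1 ∧ 0 ≤ μ2 ∧ 0 ≤ ξ1 ∧ 0 ≤ ξ2 ∧ 0 ≤ ξ3 ∧
      μ1 + μ2 = 1 ∧ ξ1 + ξ2 + ξ3 = 1 ∧
      d 0 = e1 + μ1 * e12 + ξ1 * e123 ∧
      d 1 = e2 + μ2 * e12 + ξ2 * e123 ∧
      d 2 = e3 + ξ3 * e123 ∧
      e1 ≤ α 0 0 - l - l' - g ∧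
      e2 ≤ α 1 1 - l - l' - g' ∧
      e3 ≤ α 2 2 - l ∧
      e12 ≤ l' ∧ e123 ≤ l }

/-- The explicit polyhedral region `ℱ̄₁₂₃(λ,λ',γ,γ')`. -/
def Fbar123 (α : Fin 3 → Fin 3 → ℝ) (l l' g g' : ℝ) : Set (Fin 3 → ℝ) :=
  { d | 0 ≤ d 0 ∧ 0 ≤ d 1 ∧ 0 ≤ d 2 ∧
        d 0 ≤ α 0 0 - g ∧ d 1 ≤ α 1 1 - g' ∧ d 2 ≤ α 2 2 ∧
        d 0 + d 1 ≤ α 0 0 + α 1 1 - l - l' - g - g' ∧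
        d 0 + d 2 ≤ α 0 0 + α 2 2 - l - g ∧
        d 1 + d 2 ≤ α 1 1 + α 2 2 - l - g' ∧
        d 0 + d 1 + d 2 ≤ α 0 0 + α 1 1 + α 2 2 - 2 * l - l' - g - g' }

/-- F-feasibility of the power-control quadruple `(λ,λ',γ,γ')`. -/
def FFeasible (α : Fin 3 → Fin 3 → ℝ) (l l' g g' : ℝ) : Prop :=
  0 ≤ l ∧ 0 ≤ l' ∧ 0 ≤ g ∧ 0 ≤ g' ∧
  l + l' + g ≤ α 0 0 ∧ l + l' + g' ≤ α 1 1 ∧ l ≤ α 2 2 ∧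
  α 0 1 ≤ l + l' + g + g' ∧ α 0 2 ≤ l + g ∧ α 1 0 ≤ l + l' ∧
  α 1 2 ≤ l ∧ α 2 0 ≤ l ∧ α 2 1 ≤ l + g'

/-- Split a nonnegative pair proportionally. -/
lemma split2 (x y : ℝ) (hx : 0 ≤ x) (hy : 0 ≤ y) :
    ∃ μ1 μ2 : ℝ, 0 ≤ μ1 ∧ 0 ≤ μ2 ∧ μ1 + μ2 = 1 ∧
      μ1 * (x + y) = x ∧ μ2 * (x + y) = y := by
  rcases eq_or_lt_of_le (add_nonneg hx hy) with h | h
  · have hx0 : x = 0 := by linarith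
    have hy0 : y = 0 := by linarith
    exact ⟨1, 0, by norm_num, le_refl 0, by norm_num,
      by rw [hx0, hy0]; ring, by rw [hx0, hy0]; ring⟩
  · refine ⟨x / (x + y), y / (x + y), by positivity, by positivity, ?_, ?_, ?_⟩ <;>
      field_simp

/-- Split a nonnegative triple proportionally. -/
lemma split3 (x y z : ℝ) (hx : 0 ≤ x) (hy : 0 ≤ y) (hz : 0 ≤ z) :
    ∃ ξ1 ξ2 ξ3 : ℝ, 0 ≤ ξ1 ∧ 0 ≤ ξ2 ∧ 0 ≤ ξ3 ∧ ξ1 + ξ2 + ξ3 = 1 ∧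
      ξ1 * (x + y + z) = x ∧ ξ2 * (x + y + z) = y ∧ ξ3 * (x + y + z) = z := by
  rcases eq_or_lt_of_le (by positivity : (0:ℝ) ≤ x + y + z) with h | h
  · have hx0 : x = 0 := by linarith
    have hy0 : y = 0 := by linarith
    have hz0 : z = 0 := by linarith
    exact ⟨1, 0, 0, by norm_num, le_refl 0, le_refl 0, by norm_num,
      by rw [hx0, hy0, hz0]; ring, by rw [hx0, hy0, hz0]; ring,
      by rw [hx0, hy0, hz0]; ring⟩
  · refine ⟨x / (x + y + z), y / (x + y + z), z / (x + y + z),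
      by positivity, by positivity, by positivity, ?_, ?_, ?_, ?_⟩ <;>
      field_simp

/-- Sufficient condition for membership in `F123` in additive form. -/
lemma mem_F123_intro (α : Fin 3 → Fin 3 → ℝ) (l l' g g' : ℝ) (d : Fin 3 → ℝ)
    (f1 f2 a1 a2 a3 : ℝ)
    (hf1 : 0 ≤ f1) (hf2 : 0 ≤ f2) (ha1 : 0 ≤ a1) (ha2 : 0 ≤ a2) (ha3 : 0 ≤ a3)
    (hf : f1 + f2 ≤ l') (ha : a1 + a2 + a3 ≤ l)
    (h01 : 0 ≤ d 0 - f1 - a1) (h02 : d 0 - f1 - a1 ≤ α 0 0 - l - l' - g)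
    (h11 : 0 ≤ d 1 - f2 - a2) (h12 : d 1 - f2 - a2 ≤ α 1 1 - l - l' - g')
    (h21 : 0 ≤ d 2 - a3) (h22 : d 2 - a3 ≤ α 2 2 - l) :
    d ∈ F123 α l l' g g' := by
  obtain ⟨μ1, μ2, hμ1, hμ2, hμs, hμa, hμb⟩ := split2 f1 f2 hf1 hf2
  obtain ⟨ξ1, ξ2, ξ3, hξ1, hξ2, hξ3, hξs, hξa, hξb, hξc⟩ := split3 a1 a2 a3 ha1 ha2 ha3
  refine ⟨d 0 - f1 - a1, d 1 - f2 - a2, d 2 - a3, f1 + f2, a1 + a2 + a3,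
    μ1, μ2, ξ1, ξ2, ξ3, h01, h11, h21, by linarith, by linarith,
    hμ1, hμ2, hξ1, hξ2, hξ3, hμs, hξs, by linarith, by linarith, by linarith,
    h02, h12, h22, hf, ha⟩

/-- For an F-feasible quadruple, eliminating the auxiliary variables from the SLS
achievable region `ℱ₁₂₃` yields exactly the polyhedral region `ℱ̄₁₂₃`. -/
theorem F123_eq_Fbar123 (α : Fin 3 → Fin 3 → ℝ)
    (hα : ∀ i m : Fin 3, 0 ≤ α i m)
    (l l' g g' : ℝ) (hfeas : FFeasible α l l' g g') :
    F123 α l l' g g' = Fbar123 α l l' g g' := by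
  obtain ⟨hl, hl', hg, hg', hA, hB, hC, -, -, -, -, -, -⟩ := hfeas
  ext d
  constructor
  · rintro ⟨e1, e2, e3, e12, e123, μ1, μ2, ξ1, ξ2, ξ3,
      he1, he2, he3, he12, he123, hμ1, hμ2, hξ1, hξ2, hξ3,
      hμs, hξs, hd0, hd1, hd2, hb1, hb2, hb3, hb12, hb123⟩
    have p1 : 0 ≤ μ1 * e12 := mul_nonneg hμ1 he12
    have p2 : 0 ≤ μ2 * e12 := mul_nonneg hμ2 he12
    have q1 : 0 ≤ ξ1 * e123 := mul_nonneg hξ1 he123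
    have q2 : 0 ≤ ξ2 * e123 := mul_nonneg hξ2 he123
    have q3 : 0 ≤ ξ3 * e123 := mul_nonneg hξ3 he123
    have hsum12 : μ1 * e12 + μ2 * e12 = e12 := by
      have : (μ1 + μ2) * e12 = e12 := by rw [hμs]; ring
      linarith [this, (by ring : (μ1 + μ2) * e12 = μ1 * e12 + μ2 * e12)]
    have hsum123 : ξ1 * e123 + ξ2 * e123 + ξ3 * e123 = e123 := by
      have : (ξ1 + ξ2 + ξ3) * e123 = e123 := by rw [hξs]; ring
      linarith [this, (by ring : (ξ1 + ξ2 + ξ3) * e123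
        = ξ1 * e123 + ξ2 * e123 + ξ3 * e123)]
    refine ⟨?_, ?_, ?_, ?_, ?_, ?_, ?_, ?_, ?_, ?_⟩ <;> linarith
  · rintro ⟨hd0, hd1, hd2, h1, h2, h3, h12, h13, h23, h123⟩
    set s1 : ℝ := max (d 0 - (α 0 0 - l - l' - g)) 0 with hs1def
    set s2 : ℝ := max (d 1 - (α 1 1 - l - l' - g')) 0 with hs2def
    set a3 : ℝ := max (d 2 - (α 2 2 - l)) 0 with ha3def
    have hs1nn : 0 ≤ s1 := le_max_right _ _
    have hs2nn : 0 ≤ s2 := le_max_right _ _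
    have ha3nn : 0 ≤ a3 := le_max_right _ _
    have hs1lb : d 0 - (α 0 0 - l - l' - g) ≤ s1 := le_max_left _ _
    have hs2lb : d 1 - (α 1 1 - l - l' - g') ≤ s2 := le_max_left _ _
    have ha3lb : d 2 - (α 2 2 - l) ≤ a3 := le_max_left _ _
    have hs1ub : s1 ≤ d 0 := max_le (by linarith) hd0
    have hs2ub : s2 ≤ d 1 := max_le (by linarith) hd1
    have ha3ub : a3 ≤ d 2 := max_le (by linarith) hd2
    have ha3l : a3 ≤ l := max_le (by linarith) hl
    have hS : s1 + s2 + a3 ≤ l + l' := by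
      rw [hs1def, hs2def, ha3def]
      rcases max_cases (d 0 - (α 0 0 - l - l' - g)) 0 with ⟨e1, _⟩ | ⟨e1, _⟩ <;>
        rcases max_cases (d 1 - (α 1 1 - l - l' - g')) 0 with ⟨e2, _⟩ | ⟨e2, _⟩ <;>
        rcases max_cases (d 2 - (α 2 2 - l)) 0 with ⟨e3, _⟩ | ⟨e3, _⟩ <;>
        rw [e1, e2, e3] <;> linarith
    set f1 : ℝ := min s1 l' with hf1def
    set f2 : ℝ := min s2 (l' - f1) with hf2def
    have hf1nn : 0 ≤ f1 := le_min hs1nn hl'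
    have hf1le : f1 ≤ s1 := min_le_left _ _
    have hf1le' : f1 ≤ l' := min_le_right _ _
    have hf2nn : 0 ≤ f2 := le_min hs2nn (by linarith)
    have hf2le : f2 ≤ s2 := min_le_left _ _
    have hf2le' : f2 ≤ l' - f1 := min_le_right _ _
    have ha : (s1 - f1) + (s2 - f2) + a3 ≤ l := by
      rcases le_total s1 l' with h | h
      · rw [hf2def, hf1def, min_eq_left h]
        rcases le_total s2 (l' - s1) with h' | h'
        · rw [min_eq_left h']; linarith
        · rw [min_eq_right h']; linarith
      · have e1 : f1 = l' := by rw [hf1def, min_eq_right h]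
        have e2 : f2 = 0 := by
          rw [hf2def, e1]
          simp [min_eq_right hs2nn]
        rw [e1, e2]; linarith
    exact mem_F123_intro α l l' g g' d f1 f2 (s1 - f1) (s2 - f2) a3
      hf1nn hf2nn (by linarith) (by linarith) ha3nn (by linarith) ha
      (by linarith) (by linarith) (by linarith) (by linarith)
      (by linarith) (by linarith)
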